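/- arXiv:1611.01651 — 3 statements merged into one kernel-verified Lean document; each statement's English description precedes it below -/
import Mathlib

section
/- Let A be a C*-algebra, I = [α,β] a compact interval with α < β, and F : ℝ → A a function that is continuously differentiable on I with derivative F'. Then for every real ℓ with 0 < ℓ ≤ β − α and every t ∈ I one has the operator inequality F(t)*·F(t) ≤ (2/ℓ)·∫_I F(s)*·F(s) ds + 2ℓ·∫_I F'(s)*·F'(s) ds. -/
/-!
Choose a window `J ⊆ [α, β]` of length `ℓ` containing `t`. For `s ∈ J` write
`F t = F s + ∫ u in s..t, F' u`; the inequality `(x + y)⋆(x + y) ≤ 2 x⋆x + 2 y⋆y` and the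
Cauchy–Schwarz inequality `(∫ g)⋆(∫ g) ≤ |b - a| ∫ g⋆g` (nonnegativity of the variance of `g`)
give `F(t)⋆F(t) ≤ 2 F(s)⋆F(s) + 2ℓ ∫ F'⋆F'`. Averaging this over `s ∈ J` and enlarging `J` to
`[α, β]` in the first integral yields the claim.
-/

open MeasureTheory Set
open scoped Interval

theorem star_add_mul_self_le_two_nsmul {R : Type*} [NonUnitalRing R] [StarRing R] [PartialOrder R]
    [StarOrderedRing R] (a b : R) :
    star (a + b) * (a + b) ≤ 2 • (star a * a + star b * b) := by
  have parallelogram : 2 • (star a * a + star b * b)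
      = star (a + b) * (a + b) + star (a - b) * (a - b) := by
    simp only [two_nsmul, star_add, star_sub, add_mul, mul_add, sub_mul, mul_sub]
    abel
  rw [parallelogram]
  exact le_add_of_nonneg_right (star_mul_self_nonneg _)

theorem intervalIntegral_eq_sub_of_hasDerivWithinAt_Icc {E : Type*} [NormedAddCommGroup E]
    [NormedSpace ℝ E] [CompleteSpace E] {F F' : ℝ → E} {α β : ℝ}
    (hderiv : ∀ t ∈ Icc α β, HasDerivWithinAt F (F' t) (Icc α β) t)
    (hcont : ContinuousOn F' (Icc α β)) {s t : ℝ} (hs : s ∈ Icc α β) (ht : t ∈ Icc α β) :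
    ∫ u in s..t, F' u = F t - F s := by
  have hsub : uIcc s t ⊆ Icc α β := uIcc_subset_Icc hs ht
  refine intervalIntegral.integral_eq_sub_of_hasDeriv_right
    (fun x hx => (hderiv x (hsub hx)).continuousWithinAt.mono hsub) (fun x hx => ?_)
    (hcont.mono hsub).intervalIntegrable
  have hxI : x ∈ Ico α β :=
    ⟨(le_min hs.1 ht.1).trans hx.1.le, hx.2.trans_le (max_le hs.2 ht.2)⟩
  exact (hderiv x (Ico_subset_Icc_self hxI)).mono_of_mem_nhdsWithin (Icc_mem_nhdsGT_of_mem hxI)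

theorem exists_Icc_add_subset_Icc {α β ℓ t : ℝ} (hℓ0 : 0 ≤ ℓ) (hℓ : ℓ ≤ β - α)
    (ht : t ∈ Icc α β) : ∃ a, Icc a (a + ℓ) ⊆ Icc α β ∧ t ∈ Icc a (a + ℓ) :=
  ⟨max α (t - ℓ), Icc_subset_Icc (le_max_left _ _) (by grind),
    ⟨max_le ht.1 (by linarith), by grind⟩⟩

section CStarAlgebra

variable {A : Type*} [CStarAlgebra A] [PartialOrder A] [StarOrderedRing A]

theorem star_integral_mul_integral_le {X : Type*} [MeasurableSpace X] {μ : Measure X}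
    [IsFiniteMeasure μ] {g : X → A} (hg : Integrable g μ)
    (hgg : Integrable (fun x => star (g x) * g x) μ) :
    star (∫ x, g x ∂μ) * ∫ x, g x ∂μ ≤ μ.real univ • ∫ x, star (g x) * g x ∂μ := by
  set c := μ.real univ
  set I := ∫ x, g x ∂μ
  rcases measureReal_nonneg.eq_or_lt with hc | hc
  · obtain rfl : μ = 0 := Measure.measure_univ_eq_zero.1 ((measureReal_eq_zero_iff).1 hc.symm)
    simp [I]
  set m := c⁻¹ • I
  have hg_star : Integrable (fun x => star (g x)) μ :=
    memLp_one_iff_integrable.1 (memLp_one_iff_integrable.2 hg).star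
  have hstar : ∫ x, star (g x) ∂μ = star I := (starL' ℝ : A ≃L[ℝ] A).integral_comp_comm g
  have hvar : ∫ x, star (g x - m) * (g x - m) ∂μ
      = ∫ x, star (g x) * g x ∂μ - c⁻¹ • (star I * I) := by
    have hpt : ∀ x, star (g x - m) * (g x - m)
        = star (g x) * g x - star (g x) * m - (star m * g x - star m * m) := by
      intro x; simp only [star_sub, sub_mul, mul_sub]; abel
    simp_rw [hpt]
    have hgm : Integrable (fun x => star (g x) * m) μ := hg_star.mul_const m
    have hmg : Integrable (fun x => star m * g x) μ := hg.const_mul _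
    have h₁ : Integrable (fun x => star (g x) * g x - star (g x) * m) μ := hgg.sub hgm
    have h₂ : Integrable (fun x => star m * g x - star m * m) μ := hmg.sub (integrable_const _)
    rw [integral_sub h₁ h₂, integral_sub hgg hgm,
      integral_sub hmg (integrable_const _),
      integral_mul_const_of_integrable hg_star, integral_const_mul_of_integrable hg,
      integral_const, hstar]
    simp only [m, star_smul, star_trivial, smul_mul_assoc, mul_smul_comm, smul_smul]
    rw [mul_inv_cancel_left₀ hc.ne']
    abel
  have hvar_nonneg := integral_nonneg (μ := μ) fun x => star_mul_self_nonneg (g x - m)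
  rw [hvar, sub_nonneg] at hvar_nonneg
  calc star I * I = c • c⁻¹ • (star I * I) := by rw [smul_smul, mul_inv_cancel₀ hc.ne', one_smul]
    _ ≤ c • ∫ x, star (g x) * g x ∂μ := smul_le_smul_of_nonneg_left hvar_nonneg hc.le

theorem star_intervalIntegral_mul_intervalIntegral_le {g : ℝ → A} {a b : ℝ}
    (hg : IntervalIntegrable g volume a b)
    (hgg : IntervalIntegrable (fun x => star (g x) * g x) volume a b) :
    star (∫ x in a..b, g x) * ∫ x in a..b, g x ≤ |b - a| • ∫ x in Ι a b, star (g x) * g x := by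
  have hvol : (volume.restrict (Ι a b)).real univ = |b - a| := by
    simp [measureReal_def, abs_nonneg]
  have : IsFiniteMeasure (volume.restrict (Ι a b)) := by
    rw [isFiniteMeasure_restrict, Real.volume_uIoc]; exact ENNReal.ofReal_ne_top
  rw [intervalIntegral.intervalIntegral_eq_integral_uIoc, ← hvol]
  split_ifs <;> simpa using star_integral_mul_integral_le hg.def' hgg.def'

theorem star_mul_self_le_of_hasDerivWithinAt {F F' : ℝ → A} {α β : ℝ}
    (hderiv : ∀ t ∈ Icc α β, HasDerivWithinAt F (F' t) (Icc α β) t)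
    (hcont : ContinuousOn F' (Icc α β)) {s t : ℝ} (hs : s ∈ Icc α β) (ht : t ∈ Icc α β) :
    star (F t) * F t ≤
      (2 : ℝ) • (star (F s) * F s) + (2 * |t - s|) • ∫ u in Icc α β, star (F' u) * F' u := by
  set G := ∫ u in s..t, F' u
  set C := ∫ u in Icc α β, star (F' u) * F' u
  have hsub : uIcc s t ⊆ Icc α β := uIcc_subset_Icc hs ht
  have hF'F' : ContinuousOn (fun u => star (F' u) * F' u) (Icc α β) := hcont.star.mul hcont
  have hG : star G * G ≤ |t - s| • C :=
    calc star G * G ≤ |t - s| • ∫ u in Ι s t, star (F' u) * F' u :=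
          star_intervalIntegral_mul_intervalIntegral_le (hcont.mono hsub).intervalIntegrable
            (hF'F'.mono hsub).intervalIntegrable
      _ ≤ |t - s| • C := by
          gcongr
          exact setIntegral_mono_set (hF'F'.integrableOn_compact isCompact_Icc)
            (ae_of_all _ fun u => star_mul_self_nonneg _) (uIoc_subset_uIcc.trans hsub).eventuallyLE
  have hFTC : G = F t - F s := intervalIntegral_eq_sub_of_hasDerivWithinAt_Icc hderiv hcont hs ht
  calc star (F t) * F t = star (F s + G) * (F s + G) := by rw [hFTC, add_sub_cancel]
    _ ≤ 2 • (star (F s) * F s + star G * G) := star_add_mul_self_le_two_nsmul _ _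
    _ ≤ 2 • (star (F s) * F s + |t - s| • C) := by gcongr
    _ = (2 : ℝ) • (star (F s) * F s) + (2 * |t - s|) • C := by module

end CStarAlgebra

theorem stmt0_general {A : Type*} [NormedRing A] [StarRing A] [CStarRing A] [CompleteSpace A]
    [NormedAlgebra ℂ A] [StarModule ℂ A] [PartialOrder A] [StarOrderedRing A]
    (α β : ℝ) (F F' : ℝ → A)
    (hderiv : ∀ t ∈ Set.Icc α β, HasDerivWithinAt F (F' t) (Set.Icc α β) t)
    (hcont : ContinuousOn F' (Set.Icc α β))
    (ℓ : ℝ) (hℓ0 : 0 < ℓ) (hℓ : ℓ ≤ β - α) (t : ℝ) (ht : t ∈ Set.Icc α β) :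
    star (F t) * F t ≤
      (2 / ℓ) • (∫ s in Set.Icc α β, star (F s) * F s) +
        (2 * ℓ) • (∫ s in Set.Icc α β, star (F' s) * F' s) := by
  let _ : CStarAlgebra A := ⟨⟩
  set C₁ := ∫ s in Icc α β, star (F s) * F s
  set C₂ := ∫ s in Icc α β, star (F' s) * F' s
  obtain ⟨a, hJI, htJ⟩ := exists_Icc_add_subset_Icc hℓ0.le hℓ ht
  have hFF : ContinuousOn (fun s => star (F s) * F s) (Icc α β) :=
    have hF : ContinuousOn F (Icc α β) := fun x hx => (hderiv x hx).continuousWithinAt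
    hF.star.mul hF
  have hC₂ : 0 ≤ C₂ := integral_nonneg fun _ => star_mul_self_nonneg _
  have hpt : ∀ s ∈ Icc a (a + ℓ),
      star (F t) * F t ≤ (2 : ℝ) • (star (F s) * F s) + (2 * ℓ) • C₂ := by
    intro s hs
    refine (star_mul_self_le_of_hasDerivWithinAt hderiv hcont (hJI hs) ht).trans ?_
    have : |t - s| ≤ ℓ := abs_sub_le_iff.2 ⟨by linarith [htJ.2, hs.1], by linarith [htJ.1, hs.2]⟩
    gcongr
  have hFF_J : IntegrableOn (fun s => (2 : ℝ) • (star (F s) * F s)) (Icc a (a + ℓ)) :=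
    ((hFF.mono hJI).integrableOn_compact isCompact_Icc).smul (2 : ℝ)
  have havg := setIntegral_ge_of_const_le measurableSet_Icc (by simp) hpt
    (hFF_J.add (integrableOn_const (by simp)))
  rw [integral_add hFF_J (integrableOn_const (by simp)), integral_smul,
    setIntegral_const, Real.volume_real_Icc_of_le (by linarith), add_sub_cancel_left] at havg
  have hJ_le : ∫ s in Icc a (a + ℓ), star (F s) * F s ≤ C₁ :=
    setIntegral_mono_set (hFF.integrableOn_compact isCompact_Icc)
      (ae_of_all _ fun _ => star_mul_self_nonneg _) hJI.eventuallyLE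
  rw [← smul_le_smul_iff_of_pos_left hℓ0, smul_add, smul_smul, mul_div_cancel₀ _ hℓ0.ne']
  calc ℓ • (star (F t) * F t)
      ≤ (2 : ℝ) • (∫ s in Icc a (a + ℓ), star (F s) * F s) + ℓ • (2 * ℓ) • C₂ := havg
    _ ≤ (2 : ℝ) • C₁ + ℓ • (2 * ℓ) • C₂ := by gcongr

theorem stmt0 {A : Type*} [NormedRing A] [StarRing A] [CStarRing A] [CompleteSpace A]
    [NormedAlgebra ℂ A] [StarModule ℂ A] [PartialOrder A] [StarOrderedRing A]
    (α β : ℝ) (hαβ : α < β) (F F' : ℝ → A)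
    (hderiv : ∀ t ∈ Set.Icc α β, HasDerivWithinAt F (F' t) (Set.Icc α β) t)
    (hcont : ContinuousOn F' (Set.Icc α β))
    (ℓ : ℝ) (hℓ0 : 0 < ℓ) (hℓ : ℓ ≤ β - α) (t : ℝ) (ht : t ∈ Set.Icc α β) :
    star (F t) * F t ≤
      (2 / ℓ) • (∫ s in Set.Icc α β, star (F s) * F s) +
        (2 * ℓ) • (∫ s in Set.Icc α β, star (F' s) * F' s) :=
  stmt0_general α β F F' hderiv hcont ℓ hℓ0 hℓ t ht
end

section
/- Let A be a C*-algebra, I = [α,β] a compact interval, F : I → A continuous, and w : I → ℝ continuous and nonnegative. Then (∫_I w(s)·F(s) ds)* · (∫_I w(s)·F(s) ds) ≤ (∫_I w(s) ds) · ∫_I w(s)·F(s)*·F(s) ds in the canonical order of A (operator Cauchy–Schwarz inequality for Bochner integrals). -/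
/-!
A variance argument. With `c = ∫ w`, `G = ∫ w • F` and `m = c⁻¹ • G`, the integral of the
positive elements `w • (F - m)⋆ (F - m)` is positive, and expanding it gives
`∫ w • F⋆F - c⁻¹ • G⋆G`. If `c = 0` then `w = 0` almost everywhere and both sides vanish.
-/

open MeasureTheory

section

variable {X A : Type*} [MeasurableSpace X] {μ : Measure X}

theorem integral_star [NormedAddCommGroup A] [NormedSpace ℝ A] [StarAddMonoid A]
    [ContinuousStar A] [StarModule ℝ A] (f : X → A) :
    ∫ x, star (f x) ∂μ = star (∫ x, f x ∂μ) :=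
  (starL' ℝ : A ≃L[ℝ] A).integral_comp_comm f

theorem MeasureTheory.Integrable.star [NormedAddCommGroup A] [NormedSpace ℝ A] [StarAddMonoid A]
    [ContinuousStar A] [StarModule ℝ A] {f : X → A} (hf : Integrable f μ) :
    Integrable (fun x ↦ star (f x)) μ :=
  (starL' ℝ : A ≃L[ℝ] A).toContinuousLinearMap.integrable_comp hf

theorem integral_smul_star_sub_mul_sub [NormedRing A] [NormedAlgebra ℝ A] [CompleteSpace A]
    [StarRing A] [ContinuousStar A] [StarModule ℝ A] {w : X → ℝ} {F : X → A}
    (hw : Integrable w μ)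
    (hwF : Integrable (fun x ↦ w x • F x) μ)
    (hwFF : Integrable (fun x ↦ w x • (star (F x) * F x)) μ) (m : A) :
    ∫ x, w x • (star (F x - m) * (F x - m)) ∂μ =
      ∫ x, w x • (star (F x) * F x) ∂μ - star m * ∫ x, w x • F x ∂μ
        - star (∫ x, w x • F x ∂μ) * m + (∫ x, w x ∂μ) • (star m * m) := by
  have expand : ∀ x, w x • (star (F x - m) * (F x - m)) =
      w x • (star (F x) * F x) - star m * (w x • F x) - star (w x • F x) * m
        + w x • (star m * m) := fun x ↦ by
    simp only [star_sub, star_smul, star_trivial, sub_mul, mul_sub, smul_sub,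
      mul_smul_comm, smul_mul_assoc]
    abel
  have hmwF : Integrable (fun x ↦ star m * (w x • F x)) μ := hwF.const_mul _
  have hwFm : Integrable (fun x ↦ star (w x • F x) * m) μ := hwF.star.mul_const _
  simp_rw [expand]
  rw [integral_add, integral_sub, integral_sub, integral_const_mul_of_integrable hwF,
    integral_mul_const_of_integrable hwF.star, integral_star, integral_smul_const]
  exacts [hwFF, hmwF, hwFF.sub hmwF, hwFm, (hwFF.sub hmwF).sub hwFm, hw.smul_const _]

theorem star_integral_smul_mul_le [CStarAlgebra A] [PartialOrder A] [StarOrderedRing A]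
    {w : X → ℝ} {F : X → A} (hw0 : 0 ≤ᵐ[μ] w) (hw : Integrable w μ)
    (hwF : Integrable (fun x ↦ w x • F x) μ)
    (hwFF : Integrable (fun x ↦ w x • (star (F x) * F x)) μ) :
    star (∫ x, w x • F x ∂μ) * (∫ x, w x • F x ∂μ) ≤
      (∫ x, w x ∂μ) • ∫ x, w x • (star (F x) * F x) ∂μ := by
  set G := ∫ x, w x • F x ∂μ with hG_def
  set c := ∫ x, w x ∂μ with hc_def
  have hc0 : 0 ≤ c := integral_nonneg_of_ae hw0
  rcases hc0.eq_or_lt with hc | hc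
  · have hw_zero : w =ᵐ[μ] 0 := (integral_eq_zero_iff_of_nonneg_ae hw0 hw).1 hc.symm
    have hG : G = 0 := integral_eq_zero_of_ae <| by
      filter_upwards [hw_zero] with x hx
      simp [hx]
    simp [hG, ← hc]
  · have variance_nonneg :
        0 ≤ ∫ x, w x • (star (F x - c⁻¹ • G) * (F x - c⁻¹ • G)) ∂μ :=
      integral_nonneg_of_ae <| by
        filter_upwards [hw0] with x hx
        exact smul_nonneg hx (star_mul_self_nonneg _)
    rw [integral_smul_star_sub_mul_sub hw hwF hwFF, ← hG_def, ← hc_def] at variance_nonneg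
    rw [← sub_nonneg]
    convert smul_nonneg hc.le variance_nonneg using 1
    have hcc : c * c⁻¹ = 1 := mul_inv_cancel₀ hc.ne'
    simp only [star_smul, star_trivial, smul_mul_assoc, mul_smul_comm, smul_smul, smul_sub,
      smul_add, hcc, ← mul_assoc, one_mul, one_smul]
    abel

end

theorem stmt1 {A : Type*} [NormedRing A] [StarRing A] [CStarRing A] [CompleteSpace A]
    [NormedAlgebra ℂ A] [StarModule ℂ A] [PartialOrder A] [StarOrderedRing A]
    (α β : ℝ) (F : ℝ → A) (hF : ContinuousOn F (Set.Icc α β))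
    (w : ℝ → ℝ) (hw : ContinuousOn w (Set.Icc α β))
    (hw0 : ∀ s ∈ Set.Icc α β, 0 ≤ w s) :
    star (∫ s in Set.Icc α β, w s • F s) * (∫ s in Set.Icc α β, w s • F s) ≤
      (∫ s in Set.Icc α β, w s) • ∫ s in Set.Icc α β, w s • (star (F s) * F s) := by
  let _ : CStarAlgebra A := {}
  exact star_integral_smul_mul_le ((ae_restrict_iff' measurableSet_Icc).2 (ae_of_all _ hw0))
    hw.integrableOn_Icc (hw.smul hF).integrableOn_Icc
    (hw.smul (hF.star.mul hF)).integrableOn_Icc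
end

section
/- Let δ > 0, 0 < δ' < δ, γ ∈ ℝ, k ∈ ℕ, η > 0 and r ∈ ℝ. Then ψ_k^{δ+iγ}(√η · r) = (Γ(δ+iγ+1)/(Γ(δ−δ'+iγ)·Γ(δ'+1))) · ∫_0^1 s^{δ'} (1−s)^{δ−δ'+iγ−1} e^{(1/4)·η·r²·(s−1)} ψ_k^{δ'}(√(ηs) · r) ds. -/
open MeasureTheory

/-- The generalized Laguerre polynomial `L_k^a(x)` with complex parameter `a`. -/
noncomputable def genLaguerre (k : ℕ) (a : ℂ) (x : ℂ) : ℂ :=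
  ∑ i ∈ Finset.range (k + 1),
    (-1 : ℂ) ^ i * (Complex.Gamma ((k : ℂ) + a + 1) /
      (Complex.Gamma ((i : ℂ) + a + 1) * (Nat.factorial (k - i) : ℂ) * (Nat.factorial i : ℂ)))
      * x ^ i

/-- The normalized Laguerre function `ψ_k^a(r)`. -/
noncomputable def psiLag (k : ℕ) (a : ℂ) (r : ℝ) : ℂ :=
  (Complex.Gamma ((k : ℂ) + 1) * Complex.Gamma (a + 1) / Complex.Gamma ((k : ℂ) + a + 1)) *
    genLaguerre k a ((r : ℂ) ^ 2 / 2) * Complex.exp (-(r : ℂ) ^ 2 / 4)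

/-
The classical Beta integral of Laguerre polynomials,
  ∫₀¹ s^b (1-s)^(c-1) L_k^b(x s) ds = Γ(c) Γ(k+b+1) / Γ(k+b+c+1) · L_k^(b+c)(x),
valid for Re b > -1, Re c > 0. It holds termwise: the monomial x^i s^i integrates to
Γ(i+b+1) Γ(c) / Γ(i+b+c+1), and Γ(i+b+1) cancels the denominator of the coefficient of L_k^b,
turning it into the coefficient of L_k^(b+c). Apply it with b = δ', c = δ - δ' + iγ, x = η r²/2:
the Gaussian factors combine, e^(η r² (s-1)/4) · e^(-η s r²/4) = e^(-η r²/4), so they leave the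
integral, and the normalizing constants of ψ match up.
-/

open Complex

theorem natCast_add_add_one_re_pos (n : ℕ) {d : ℂ} (hd : -1 < d.re) : 0 < (n + d + 1).re := by
  simp only [add_re, natCast_re, one_re]; linarith [(n.cast_nonneg : (0 : ℝ) ≤ n)]

theorem Gamma_natCast_add_add_one_ne_zero (n : ℕ) {d : ℂ} (hd : -1 < d.re) :
    Gamma (n + d + 1) ≠ 0 :=
  Gamma_ne_zero_of_re_pos (natCast_add_add_one_re_pos n hd)

theorem betaIntegrand_natCast_add_add_one_eqOn (b c : ℂ) (i : ℕ) :
    Set.EqOn (fun s : ℝ => (s : ℂ) ^ (i + b + 1 - 1) * (1 - (s : ℂ)) ^ (c - 1))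
      (fun s : ℝ => (s : ℂ) ^ b * (1 - (s : ℂ)) ^ (c - 1) * (s : ℂ) ^ i) (Set.uIoc 0 1) := by
  intro s hs
  rw [Set.uIoc_of_le zero_le_one] at hs
  simp only [add_sub_cancel_right, cpow_add _ _ (ofReal_ne_zero.mpr hs.1.ne'), cpow_natCast]
  ring

theorem intervalIntegrable_cpow_mul_one_sub_cpow_mul_pow {b c : ℂ} (hb : -1 < b.re)
    (hc : 0 < c.re) (i : ℕ) :
    IntervalIntegrable (fun s : ℝ => (s : ℂ) ^ b * (1 - (s : ℂ)) ^ (c - 1) * (s : ℂ) ^ i)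
      volume 0 1 :=
  (intervalIntegrable_congr (betaIntegrand_natCast_add_add_one_eqOn b c i)).mp
    (betaIntegral_convergent (natCast_add_add_one_re_pos i hb) hc)

theorem integral_cpow_mul_one_sub_cpow_mul_pow {b c : ℂ} (hb : -1 < b.re) (hc : 0 < c.re)
    (i : ℕ) :
    ∫ s in (0 : ℝ)..1, (s : ℂ) ^ b * (1 - (s : ℂ)) ^ (c - 1) * (s : ℂ) ^ i =
      Gamma (i + b + 1) * Gamma c / Gamma (i + b + 1 + c) := by
  rw [← betaIntegral_eq_Gamma_mul_div _ _ (natCast_add_add_one_re_pos i hb) hc, betaIntegral]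
  exact (intervalIntegral.integral_congr_ae
    (Filter.Eventually.of_forall (betaIntegrand_natCast_add_add_one_eqOn b c i))).symm

noncomputable def genLaguerreCoeff (k : ℕ) (a : ℂ) (i : ℕ) : ℂ :=
  (-1 : ℂ) ^ i * (Gamma ((k : ℂ) + a + 1) /
    (Gamma ((i : ℂ) + a + 1) * (Nat.factorial (k - i) : ℂ) * (Nat.factorial i : ℂ)))

theorem genLaguerre_eq_sum (k : ℕ) (a x : ℂ) :
    genLaguerre k a x = ∑ i ∈ Finset.range (k + 1), genLaguerreCoeff k a i * x ^ i :=
  rfl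

theorem genLaguerreCoeff_mul_Gamma_div {b c : ℂ} (hb : -1 < b.re) (hc : 0 < c.re) (k i : ℕ) :
    genLaguerreCoeff k b i * (Gamma (i + b + 1) * Gamma c / Gamma (i + (b + c) + 1)) =
      Gamma c * Gamma (k + b + 1) / Gamma (k + (b + c) + 1) * genLaguerreCoeff k (b + c) i := by
  have hbc : -1 < (b + c).re := by rw [add_re]; linarith
  have h1 := Gamma_natCast_add_add_one_ne_zero i hb
  have h2 := Gamma_natCast_add_add_one_ne_zero k hbc
  simp only [genLaguerreCoeff]
  field_simp

theorem integral_cpow_mul_one_sub_cpow_mul_genLaguerre {b c : ℂ} (hb : -1 < b.re)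
    (hc : 0 < c.re) (k : ℕ) (x : ℂ) :
    ∫ s in (0 : ℝ)..1, (s : ℂ) ^ b * (1 - (s : ℂ)) ^ (c - 1) * genLaguerre k b (x * s) =
      Gamma c * Gamma (k + b + 1) / Gamma (k + (b + c) + 1) * genLaguerre k (b + c) x := by
  have hterm : ∀ i : ℕ, ∀ s : ℝ, (s : ℂ) ^ b * (1 - (s : ℂ)) ^ (c - 1) *
      (genLaguerreCoeff k b i * (x * s) ^ i) = genLaguerreCoeff k b i * x ^ i *
        ((s : ℂ) ^ b * (1 - (s : ℂ)) ^ (c - 1) * (s : ℂ) ^ i) := fun i s => by ring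
  simp only [genLaguerre_eq_sum, Finset.mul_sum, hterm]
  rw [intervalIntegral.integral_finsetSum fun i _ =>
    (intervalIntegrable_cpow_mul_one_sub_cpow_mul_pow hb hc i).const_mul _]
  refine Finset.sum_congr rfl fun i _ => ?_
  rw [intervalIntegral.integral_const_mul, integral_cpow_mul_one_sub_cpow_mul_pow hb hc i,
    show i + b + 1 + c = i + (b + c) + 1 by ring,
    mul_right_comm, genLaguerreCoeff_mul_Gamma_div hb hc]
  ring

theorem psiLag_sqrt_mul {x : ℝ} (hx : 0 ≤ x) (k : ℕ) (a : ℂ) (r : ℝ) :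
    psiLag k a (Real.sqrt x * r) =
      Gamma (k + 1) * Gamma (a + 1) / Gamma (k + a + 1) * genLaguerre k a (x * r ^ 2 / 2) *
        exp (-(x * r ^ 2) / 4) := by
  have hsq : ((Real.sqrt x * r : ℝ) : ℂ) ^ 2 = x * r ^ 2 := by
    rw [← ofReal_pow, mul_pow, Real.sq_sqrt hx]; push_cast; rfl
  rw [psiLag, hsq]

theorem stmt6_general (δ δ' γ : ℝ) (hδ'0 : 0 < δ') (hδ' : δ' < δ)
    (k : ℕ) (η : ℝ) (hη : 0 < η) (r : ℝ) :
    psiLag k ((δ : ℂ) + (γ : ℂ) * Complex.I) (Real.sqrt η * r) =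
      (Complex.Gamma ((δ : ℂ) + (γ : ℂ) * Complex.I + 1) /
        (Complex.Gamma ((δ : ℂ) - (δ' : ℂ) + (γ : ℂ) * Complex.I) *
          Complex.Gamma ((δ' : ℂ) + 1))) *
      ∫ s in (0 : ℝ)..1,
        (s : ℂ) ^ (δ' : ℂ) * (1 - (s : ℂ)) ^ ((δ : ℂ) - (δ' : ℂ) + (γ : ℂ) * Complex.I - 1) *
          Complex.exp ((1 / 4 : ℂ) * (η : ℂ) * (r : ℂ) ^ 2 * ((s : ℂ) - 1)) *
          psiLag k (δ' : ℂ) (Real.sqrt (η * s) * r) := by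
  set a : ℂ := (δ : ℂ) + (γ : ℂ) * I
  set b : ℂ := (δ' : ℂ)
  have hb : -1 < b.re := by simp only [b, ofReal_re]; linarith
  have hc : 0 < (a - b).re := by simp [a, b, hδ']
  have hc_eq : (δ : ℂ) - δ' + γ * I = a - b := by ring
  have hintegrand : Set.EqOn
      (fun s : ℝ => (s : ℂ) ^ b * (1 - (s : ℂ)) ^ (a - b - 1) *
        exp (1 / 4 * η * r ^ 2 * (s - 1)) * psiLag k b (Real.sqrt (η * s) * r))
      (fun s : ℝ => Gamma (k + 1) * Gamma (b + 1) / Gamma (k + b + 1) * exp (-(η * r ^ 2) / 4) *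
        ((s : ℂ) ^ b * (1 - (s : ℂ)) ^ (a - b - 1) * genLaguerre k b (η * r ^ 2 / 2 * s)))
      (Set.uIcc 0 1) := by
    intro s hs
    rw [Set.uIcc_of_le zero_le_one] at hs
    have hexp : exp (1 / 4 * η * r ^ 2 * (s - 1)) * exp (-(η * s * r ^ 2) / 4) =
        exp (-(η * r ^ 2) / 4) := by
      rw [← exp_add]; ring_nf
    simp only [psiLag_sqrt_mul (mul_nonneg hη.le hs.1), ofReal_mul, ← hexp]
    ring_nf
  rw [hc_eq, intervalIntegral.integral_congr hintegrand, intervalIntegral.integral_const_mul,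
    integral_cpow_mul_one_sub_cpow_mul_genLaguerre hb hc, add_sub_cancel, psiLag_sqrt_mul hη.le]
  have h1 := Gamma_ne_zero_of_re_pos hc
  have h2 : Gamma (b + 1) ≠ 0 := by simpa using Gamma_natCast_add_add_one_ne_zero 0 hb
  have h3 := Gamma_natCast_add_add_one_ne_zero k hb
  field_simp

theorem stmt6 (δ δ' γ : ℝ) (hδ : 0 < δ) (hδ'0 : 0 < δ') (hδ' : δ' < δ)
    (k : ℕ) (η : ℝ) (hη : 0 < η) (r : ℝ) :
    psiLag k ((δ : ℂ) + (γ : ℂ) * Complex.I) (Real.sqrt η * r) =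
      (Complex.Gamma ((δ : ℂ) + (γ : ℂ) * Complex.I + 1) /
        (Complex.Gamma ((δ : ℂ) - (δ' : ℂ) + (γ : ℂ) * Complex.I) *
          Complex.Gamma ((δ' : ℂ) + 1))) *
      ∫ s in (0 : ℝ)..1,
        (s : ℂ) ^ (δ' : ℂ) * (1 - (s : ℂ)) ^ ((δ : ℂ) - (δ' : ℂ) + (γ : ℂ) * Complex.I - 1) *
          Complex.exp ((1 / 4 : ℂ) * (η : ℂ) * (r : ℂ) ^ 2 * ((s : ℂ) - 1)) *
          psiLag k (δ' : ℂ) (Real.sqrt (η * s) * r) :=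
  stmt6_general δ δ' γ hδ'0 hδ' k η hη r
end
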